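/- arXiv:1810.05690 — 2 statements merged into one kernel-verified Lean document; each statement's English description precedes it below -/
import Mathlib

section
/- Let N = n+1 be odd with n ≥ 2, and let λ ∈ Λ_{j,N} for some j ∈ {1, …, N}. Then the n×n real matrix whose columns are the n vectors v_i(λ) = λ_i(e_{i−1} − e_i), for i ∈ {1, …, N} with i ≠ j taken in increasing order of i, has determinant equal to 1 or −1. In particular, each simplex G^0_λ = conv({v_i(λ) : 1 ≤ i ≤ N}) is a unimodular simplex. -/
open Finset

/-- `eVec n k` is the standard basis vector `e_k` of `ℝ^n` for `1 ≤ k ≤ n`,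
with the convention `e_0 = e_{n+1} = 0`. -/
noncomputable def eVec (n : ℕ) (k : ℕ) : Fin n → ℝ := fun t => if (t : ℕ) + 1 = k then 1 else 0

/-- `dVec n i = e_{i-1} - e_i`. -/
noncomputable def dVec (n : ℕ) (i : ℕ) : Fin n → ℝ := eVec n (i - 1) - eVec n i

/-- `vPt n l i = λ_i (e_{i-1} - e_i)`. -/
noncomputable def vPt (n : ℕ) (l : ℕ → ℝ) (i : ℕ) : Fin n → ℝ := l i • dVec n i

/-- The `k`-th element (0-based, `k : Fin n`) of `{1, …, N} \ {j}` listed in increasing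
order is `k+1` if `k+1 < j` and `k+2` otherwise. -/
def skipIdx (j : ℕ) (k : ℕ) : ℕ := if k + 1 < j then k + 1 else k + 2

theorem stmt9 (n N : ℕ) (hn : 2 ≤ n) (hN : N = n + 1) (hNo : Odd N)
    (j : ℕ) (hj : j ∈ Finset.Icc 1 N)
    (l : ℕ → ℝ) (hlj : l j = 0)
    (hl1 : ∀ i ∈ Finset.Icc 1 N, i ≠ j → l i = 1 ∨ l i = -1)
    (hl2 : ∑ i ∈ Finset.Icc 1 N, l i = 0) :
    (Matrix.of fun (r k : Fin n) => vPt n l (skipIdx j (k : ℕ)) r).det = 1 ∨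
    (Matrix.of fun (r k : Fin n) => vPt n l (skipIdx j (k : ℕ)) r).det = -1 := by
  obtain ⟨hj1, hjN⟩ := Finset.mem_Icc.mp hj
  set m := j - 1 with hm
  have hjm : j = m + 1 := by omega
  have hmn : m ≤ n := by omega
  set M : Matrix (Fin n) (Fin n) ℝ :=
    Matrix.of fun (r k : Fin n) => vPt n l (skipIdx j (k : ℕ)) r with hMdef
  have happ : ∀ (i : ℕ) (r : Fin n), vPt n l i r =
      l i * ((if (r : ℕ) + 1 = i - 1 then (1:ℝ) else 0) -
             (if (r : ℕ) + 1 = i then (1:ℝ) else 0)) := by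
    intro i r
    simp [vPt, dVec, eVec, Pi.smul_apply, Pi.sub_apply, smul_eq_mul]
  have hMrk : ∀ r k : Fin n, M r k = vPt n l (skipIdx j (k : ℕ)) r := fun r k => rfl
  -- the two skipIdx cases
  have hsk1 : ∀ k : Fin n, (k : ℕ) < m → skipIdx j (k : ℕ) = (k : ℕ) + 1 := by
    intro k hk; unfold skipIdx; rw [if_pos (by omega)]
  have hsk2 : ∀ k : Fin n, m ≤ (k : ℕ) → skipIdx j (k : ℕ) = (k : ℕ) + 2 := by
    intro k hk; unfold skipIdx; rw [if_neg (by omega)]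
  -- zero pattern
  have hz : ∀ r k : Fin n,
      (((k : ℕ) < m ∧ (k : ℕ) < (r : ℕ)) ∨ (m ≤ (k : ℕ) ∧ (r : ℕ) < (k : ℕ))) →
      M r k = 0 := by
    intro r k h
    rw [hMrk, happ]
    rcases h with ⟨h1, h2⟩ | ⟨h1, h2⟩
    · rw [hsk1 k h1, if_neg (by omega), if_neg (by omega)]; ring
    · rw [hsk2 k h1, if_neg (by omega), if_neg (by omega)]; ring
  -- diagonal entries are ±1
  have hd : ∀ k : Fin n, M k k = 1 ∨ M k k = -1 := by
    intro k
    have hkn : (k : ℕ) < n := k.isLt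
    rw [hMrk, happ]
    by_cases hk : (k : ℕ) < m
    · rw [hsk1 k hk, if_neg (by omega), if_pos (by omega)]
      have := hl1 ((k : ℕ) + 1) (Finset.mem_Icc.mpr (by omega)) (by omega)
      rcases this with h | h <;> rw [h] <;> [right; left] <;> ring
    · rw [hsk2 k (by omega), if_pos (by omega), if_neg (by omega)]
      have := hl1 ((k : ℕ) + 2) (Finset.mem_Icc.mpr (by omega)) (by omega)
      rcases this with h | h <;> rw [h] <;> [left; right] <;> ring
  -- the permutation reversing the second block
  have hfval : ∀ k : Fin n, (if (k : ℕ) < m then (k : ℕ) else m + n - 1 - (k : ℕ)) < n := by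
    intro k; have := k.isLt; split <;> omega
  set f : Fin n → Fin n :=
    fun k => ⟨if (k : ℕ) < m then (k : ℕ) else m + n - 1 - (k : ℕ), hfval k⟩ with hfdef
  have hfv : ∀ k : Fin n, ((f k : Fin n) : ℕ) =
      if (k : ℕ) < m then (k : ℕ) else m + n - 1 - (k : ℕ) := fun k => rfl
  have hinv : Function.Involutive f := by
    intro k
    apply Fin.ext
    rw [hfv, hfv]
    have := k.isLt
    split_ifs <;> omega
  set σ : Equiv.Perm (Fin n) := hinv.toPerm with hσdef
  have hσv : ∀ k : Fin n, ((σ k : Fin n) : ℕ) =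
      if (k : ℕ) < m then (k : ℕ) else m + n - 1 - (k : ℕ) := fun k => rfl
  have hdet : M.det = (M.submatrix σ σ).det :=
    (Matrix.det_submatrix_equiv_self σ M).symm
  have htri : ∀ i k : Fin n, k < i → (M.submatrix σ σ) i k = 0 := by
    intro i k hik
    have hik' : (k : ℕ) < (i : ℕ) := hik
    have hi := i.isLt
    have hk := k.isLt
    show M (σ i) (σ k) = 0
    apply hz
    rw [hσv, hσv]
    split_ifs <;> omega
  have hdiag : (M.submatrix σ σ).det = ∏ i, M (σ i) (σ i) := by
    rw [Matrix.det_of_upperTriangular htri]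
    rfl
  have hprodeq : ∏ i, M (σ i) (σ i) = ∏ i, M i i :=
    Equiv.prod_comp σ (fun i => M i i)
  have hfinal : (∏ i, M i i) = 1 ∨ (∏ i, M i i) = -1 := by
    refine Finset.prod_induction (fun i => M i i) (fun x => x = 1 ∨ x = -1) ?_ (Or.inl rfl) ?_
    · rintro a b (rfl | rfl) (rfl | rfl) <;> norm_num
    · intro x _; exact hd x
  rw [show (Matrix.of fun (r k : Fin n) => vPt n l (skipIdx j (k : ℕ)) r).det = M.det from rfl,
    hdet, hdiag, hprodeq]
  exact hfinal
end

section
/- Let N = n+1 be odd with n ≥ 2, and let λ, λ' ∈ Λ_N with λ ≠ λ'. Then the interiors (in ℝ^n) of the two simplices G^0_λ = conv({v_i(λ) : 1 ≤ i ≤ N}) and G^0_{λ'} = conv({v_i(λ') : 1 ≤ i ≤ N}) are disjoint. -/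
open Finset

/-- The index set `Λ_N` for odd `N`, as functions `ℕ → ℝ` supported on `{1, …, N}`
with exactly one zero coordinate among `{1, …, N}`, remaining coordinates `±1`,
and coordinate sum `0`. -/
def LambdaOdd (N : ℕ) : Set (ℕ → ℝ) :=
  {l | (∀ i, i ∉ Finset.Icc 1 N → l i = 0) ∧
       ∃ j ∈ Finset.Icc 1 N, l j = 0 ∧
        (∀ i ∈ Finset.Icc 1 N, i ≠ j → l i = 1 ∨ l i = -1) ∧
        (∑ i ∈ Finset.Icc 1 N, l i) = 0}

/-- Telescoping formula for coordinates of combinations of the `dVec`s. -/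
lemma tele_aux (n N : ℕ) (hN : N = n + 1) (w : ℕ → ℝ) (p : Fin n) :
    (∑ i ∈ Finset.Icc 1 N, w i • dVec n i) p = w ((p : ℕ) + 2) - w ((p : ℕ) + 1) := by
  subst hN
  have hplt := p.isLt
  rw [Finset.sum_apply]
  have h : ∀ i ∈ Finset.Icc 1 (n + 1), (w i • dVec n i) p
      = (if i = (p : ℕ) + 2 then w i else 0) - (if i = (p : ℕ) + 1 then w i else 0) := by
    intro i hi
    rw [Finset.mem_Icc] at hi
    simp only [Pi.smul_apply, dVec, Pi.sub_apply, eVec, smul_eq_mul]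
    have e1 : ((p : ℕ) + 1 = i - 1) = (i = (p : ℕ) + 2) := by
      apply propext; constructor <;> intro h <;> omega
    have e2 : ((p : ℕ) + 1 = i) = (i = (p : ℕ) + 1) := by
      apply propext; constructor <;> intro h <;> omega
    simp only [e1, e2]
    split_ifs <;> first | ring | (exfalso; omega)
  rw [Finset.sum_congr rfl h, Finset.sum_sub_distrib,
    Finset.sum_ite_eq' (Finset.Icc 1 (n + 1)) ((p : ℕ) + 2) w,
    Finset.sum_ite_eq' (Finset.Icc 1 (n + 1)) ((p : ℕ) + 1) w,
    if_pos (by rw [Finset.mem_Icc]; omega), if_pos (by rw [Finset.mem_Icc]; omega)]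

/-- If successive values of `C` agree, then `C` is constant on `[1, N]`. -/
lemma const_aux (n N : ℕ) (hN : N = n + 1) (C : ℕ → ℝ)
    (h : ∀ p : Fin n, C ((p : ℕ) + 2) = C ((p : ℕ) + 1)) :
    ∀ m, 1 ≤ m → m ≤ N → C m = C 1 := by
  intro m
  induction m with
  | zero => intro h1 _; omega
  | succ k ih =>
    intro h1 h2
    rcases Nat.lt_or_ge 1 (k + 1) with hgt | hle
    · have hk : 1 ≤ k := by omega
      have hkn : k - 1 < n := by omega
      have hh := h ⟨k - 1, hkn⟩
      simp only [Fin.val_mk] at hh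
      have e2 : k - 1 + 2 = k + 1 := by omega
      have e1 : k - 1 + 1 = k := by omega
      rw [e2, e1] at hh
      rw [hh]
      exact ih hk (by omega)
    · have hk1 : k + 1 = 1 := by omega
      rw [hk1]

/-- Any point of the convex hull is a convex combination indexed by `Icc 1 N`. -/
lemma repr_aux (n N : ℕ) (l : ℕ → ℝ) (x : Fin n → ℝ)
    (hx : x ∈ convexHull ℝ {x | ∃ i ∈ Finset.Icc 1 N, x = vPt n l i}) :
    ∃ t : ℕ → ℝ, (∀ i ∈ Finset.Icc 1 N, 0 ≤ t i) ∧
      (∑ i ∈ Finset.Icc 1 N, t i) = 1 ∧ x = ∑ i ∈ Finset.Icc 1 N, t i • vPt n l i := by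
  classical
  rw [_root_.convexHull_eq] at hx
  obtain ⟨ι, T, w, z, hw0, hw1, hz, hcen⟩ := hx
  choose f hf1 hf2 using hz
  set f' : ι → ℕ := fun i => if h : i ∈ T then f i h else 1 with hf'
  have hmaps : ∀ i ∈ T, f' i ∈ Finset.Icc 1 N := by
    intro i hi; simp only [hf', dif_pos hi]; exact hf1 i hi
  refine ⟨fun m => ∑ i ∈ T.filter (fun i => f' i = m), w i, ?_, ?_, ?_⟩
  · intro m _
    exact Finset.sum_nonneg fun i hi => hw0 i (Finset.mem_filter.mp hi).1
  · rw [Finset.sum_fiberwise_of_maps_to hmaps w]; exact hw1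
  · rw [← hcen, Finset.centerMass_eq_of_sum_1 _ _ hw1]
    rw [← Finset.sum_fiberwise_of_maps_to hmaps (fun i => w i • z i)]
    refine Finset.sum_congr rfl fun m _ => ?_
    rw [Finset.sum_smul]
    refine Finset.sum_congr rfl fun i hi => ?_
    obtain ⟨hiT, hfi⟩ := Finset.mem_filter.mp hi
    rw [← hfi]
    simp only [hf', dif_pos hiT]
    rw [hf2 i hiT]

/-- Comparison of two representations differing by a multiple of one vertex vector. -/
lemma perturb_aux (n N : ℕ) (hN : N = n + 1) (l : ℕ → ℝ)
    (j : ℕ) (hj : j ∈ Finset.Icc 1 N) (hlj : l j = 0)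
    (hsign : ∀ i ∈ Finset.Icc 1 N, i ≠ j → l i = 1 ∨ l i = -1)
    (t r : ℕ → ℝ) (d : ℝ) (i1 : ℕ) (hi1 : i1 ∈ Finset.Icc 1 N) (hi1j : i1 ≠ j)
    (heq : ∑ m ∈ Finset.Icc 1 N, t m • vPt n l m
         = d • vPt n l i1 + ∑ m ∈ Finset.Icc 1 N, r m • vPt n l m) :
    (∀ m ∈ Finset.Icc 1 N, m ≠ j → m ≠ i1 → t m = r m) ∧ t i1 - r i1 = d := by
  classical
  set C : ℕ → ℝ :=
    fun m => l m * t m - l m * r m - (if m = i1 then d * l i1 else 0) with hC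
  have hsum1 : ∑ m ∈ Finset.Icc 1 N, t m • vPt n l m
      = ∑ m ∈ Finset.Icc 1 N, (l m * t m) • dVec n m :=
    Finset.sum_congr rfl fun m _ => by rw [vPt, smul_smul, mul_comm]
  have hsum2 : ∑ m ∈ Finset.Icc 1 N, r m • vPt n l m
      = ∑ m ∈ Finset.Icc 1 N, (l m * r m) • dVec n m :=
    Finset.sum_congr rfl fun m _ => by rw [vPt, smul_smul, mul_comm]
  have hsum3 : d • vPt n l i1
      = ∑ m ∈ Finset.Icc 1 N, (if m = i1 then d * l i1 else 0) • dVec n m := by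
    have h : ∀ m ∈ Finset.Icc 1 N, (if m = i1 then d * l i1 else 0) • dVec n m
        = (if m = i1 then (d * l i1) • dVec n m else (0 : Fin n → ℝ)) := by
      intro m _; split_ifs <;> simp
    rw [Finset.sum_congr rfl h,
      Finset.sum_ite_eq' (Finset.Icc 1 N) i1 (fun m => (d * l i1) • dVec n m),
      if_pos hi1, vPt, smul_smul]
  have hstep : ∀ p : Fin n, C ((p : ℕ) + 2) = C ((p : ℕ) + 1) := by
    intro p
    have e1 := tele_aux n N hN (fun m => l m * t m) p
    have e2 := tele_aux n N hN (fun m => l m * r m) p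
    have e3 := tele_aux n N hN (fun m => if m = i1 then d * l i1 else 0) p
    have e4 : (∑ m ∈ Finset.Icc 1 N, (l m * t m) • dVec n m) p
        = (∑ m ∈ Finset.Icc 1 N, (if m = i1 then d * l i1 else 0) • dVec n m) p
          + (∑ m ∈ Finset.Icc 1 N, (l m * r m) • dVec n m) p := by
      rw [← hsum1, ← hsum2, ← hsum3, heq, Pi.add_apply]
    rw [e1, e2, e3] at e4
    simp only [hC]
    linarith
  have hconst := const_aux n N hN C hstep
  have hCj : C j = 0 := by
    have : ¬ (j = i1) := fun h => hi1j h.symm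
    simp [hC, hlj, this]
  have hz : ∀ m ∈ Finset.Icc 1 N, C m = 0 := by
    intro m hm
    rw [Finset.mem_Icc] at hm
    rw [Finset.mem_Icc] at hj
    rw [hconst m hm.1 hm.2, ← hconst j hj.1 hj.2, hCj]
  constructor
  · intro m hm hmj hmi1
    have h := hz m hm
    have hlm := hsign m hm hmj
    simp only [hC, if_neg hmi1] at h
    rcases hlm with h' | h' <;> rw [h'] at h <;> linarith
  · have h := hz i1 hi1
    have hlm := hsign i1 hi1 hi1j
    simp only [hC, eq_self_iff_true, if_true] at h
    rcases hlm with h' | h' <;> rw [h'] at h <;> linarith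

/-- Barycentric weights of an interior point are strictly positive. -/
lemma pos_aux (n N : ℕ) (hn : 2 ≤ n) (hN : N = n + 1) (l : ℕ → ℝ) (hl : l ∈ LambdaOdd N)
    (x : Fin n → ℝ)
    (hx : x ∈ interior (convexHull ℝ {x | ∃ i ∈ Finset.Icc 1 N, x = vPt n l i}))
    (t : ℕ → ℝ) (ht0 : ∀ i ∈ Finset.Icc 1 N, 0 ≤ t i)
    (ht1 : (∑ i ∈ Finset.Icc 1 N, t i) = 1)
    (hxt : x = ∑ i ∈ Finset.Icc 1 N, t i • vPt n l i) :
    ∀ i0 ∈ Finset.Icc 1 N, 0 < t i0 := by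
  classical
  obtain ⟨hsupp, j, hj, hlj, hsign, hsum⟩ := hl
  obtain ⟨ε, hε, hball⟩ := Metric.mem_nhds_iff.mp (mem_interior_iff_mem_nhds.mp hx)
  have main : ∀ i1 ∈ Finset.Icc 1 N, i1 ≠ j → ∀ d : ℝ, |d| * ‖vPt n l i1‖ < ε →
      ∃ r : ℕ → ℝ, (∀ m ∈ Finset.Icc 1 N, 0 ≤ r m) ∧ (∑ m ∈ Finset.Icc 1 N, r m) = 1 ∧
        (∀ m ∈ Finset.Icc 1 N, m ≠ j → m ≠ i1 → t m = r m) ∧ t i1 - r i1 = d := by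
    intro i1 hi1 hi1j d hd
    have hyball : x - d • vPt n l i1 ∈ Metric.ball x ε := by
      rw [Metric.mem_ball, dist_eq_norm]
      have he : x - d • vPt n l i1 - x = -(d • vPt n l i1) := by abel
      rw [he, norm_neg, norm_smul, Real.norm_eq_abs]
      exact hd
    obtain ⟨r, hr0, hr1, hyr⟩ := repr_aux n N l _ (hball hyball)
    have heq : ∑ m ∈ Finset.Icc 1 N, t m • vPt n l m
        = d • vPt n l i1 + ∑ m ∈ Finset.Icc 1 N, r m • vPt n l m := by
      rw [← hyr, ← hxt]; abel
    obtain ⟨h1, h2⟩ := perturb_aux n N hN l j hj hlj hsign t r d i1 hi1 hi1j heq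
    exact ⟨r, hr0, hr1, h1, h2⟩
  intro i0 hi0
  by_cases hij : i0 = j
  · -- i0 = j : perturb along some other index i1
    subst hij
    set i1 : ℕ := if i0 = 1 then 2 else 1 with hi1def
    have hi1 : i1 ∈ Finset.Icc 1 N := by
      rw [Finset.mem_Icc]; rw [hi1def]; split_ifs <;> omega
    have hi1j : i1 ≠ i0 := by
      rw [hi1def]; split_ifs with h <;> omega
    set δ : ℝ := ε / (2 * (‖vPt n l i1‖ + 1)) with hδ
    have hD : (0:ℝ) < 2 * (‖vPt n l i1‖ + 1) := by positivity
    have hδpos : 0 < δ := div_pos hε hD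
    have hδlt : |(-δ)| * ‖vPt n l i1‖ < ε := by
      rw [abs_neg, abs_of_pos hδpos]
      have h1 : δ * (‖vPt n l i1‖ + 1) = ε / 2 := by
        rw [hδ]; field_simp
      nlinarith [norm_nonneg (vPt n l i1)]
    obtain ⟨r, hr0, hr1, hr2, hr3⟩ := main i1 hi1 hi1j (-δ) hδlt
    have hsum0 : ∑ m ∈ Finset.Icc 1 N, (r m - t m) = 0 := by
      rw [Finset.sum_sub_distrib, hr1, ht1]; ring
    have hptw : ∀ m ∈ Finset.Icc 1 N,
        r m - t m = (if m = i1 then δ else 0) + (if m = i0 then r m - t m else 0) := by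
      intro m hm
      by_cases h1 : m = i1
      · subst h1
        rw [if_pos rfl, if_neg hi1j]
        linarith [hr3]
      · by_cases h2 : m = i0
        · subst h2
          rw [if_neg (Ne.symm hi1j), if_pos rfl]
          ring
        · rw [if_neg h1, if_neg h2]
          have := hr2 m hm h2 h1
          linarith
    rw [Finset.sum_congr rfl hptw, Finset.sum_add_distrib,
      Finset.sum_ite_eq' (Finset.Icc 1 N) i1 (fun _ => δ),
      Finset.sum_ite_eq' (Finset.Icc 1 N) i0 (fun m => r m - t m),
      if_pos hi1, if_pos hi0] at hsum0
    have := hr0 i0 hi0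
    linarith
  · -- i0 ≠ j : perturb along i0 itself
    set δ : ℝ := ε / (2 * (‖vPt n l i0‖ + 1)) with hδ
    have hD : (0:ℝ) < 2 * (‖vPt n l i0‖ + 1) := by positivity
    have hδpos : 0 < δ := div_pos hε hD
    have hδlt : |δ| * ‖vPt n l i0‖ < ε := by
      rw [abs_of_pos hδpos]
      have h1 : δ * (‖vPt n l i0‖ + 1) = ε / 2 := by
        rw [hδ]; field_simp
      nlinarith [norm_nonneg (vPt n l i0)]
    obtain ⟨r, hr0, hr1, hr2, hr3⟩ := main i0 hi0 hij δ hδlt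
    have := hr0 i0 hi0
    linarith

/-- The sign-counting contradiction when the constant is positive. -/
lemma sum_contra (N : ℕ) (l l' t s : ℕ → ℝ)
    (hl : l ∈ LambdaOdd N) (hl' : l' ∈ LambdaOdd N)
    (ht0 : ∀ i ∈ Finset.Icc 1 N, 0 ≤ t i) (hs0 : ∀ i ∈ Finset.Icc 1 N, 0 ≤ s i)
    (c : ℝ) (hc : 0 < c)
    (hC : ∀ i ∈ Finset.Icc 1 N, l i * t i - l' i * s i = c) : False := by
  obtain ⟨hsupp, j, hj, hlj, hsign, hsum⟩ := hl
  obtain ⟨hsupp', j', hj', hlj', hsign', hsum'⟩ := hl'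
  have trichl : ∀ i ∈ Finset.Icc 1 N, l i = 0 ∨ l i = 1 ∨ l i = -1 := by
    intro i hi
    by_cases h : i = j
    · left; rw [h]; exact hlj
    · right; exact hsign i hi h
  have trichl' : ∀ i ∈ Finset.Icc 1 N, l' i = 0 ∨ l' i = 1 ∨ l' i = -1 := by
    intro i hi
    by_cases h : i = j'
    · left; rw [h]; exact hlj'
    · right; exact hsign' i hi h
  have key : ∀ i ∈ Finset.Icc 1 N, l' i ≤ l i := by
    intro i hi
    have h1 := hC i hi
    have h2 := ht0 i hi
    have h3 := hs0 i hi
    rcases trichl' i hi with h' | h' | h' <;> rcases trichl i hi with h | h | h <;>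
      rw [h, h'] at h1 ⊢ <;> linarith
  have hstrict : l' j' < l j' := by
    have h1 := hC j' hj'
    have h2 := ht0 j' hj'
    rw [hlj'] at h1 ⊢
    rcases trichl j' hj' with h | h | h <;> rw [h] at h1 ⊢ <;> linarith
  have hzero : ∑ i ∈ Finset.Icc 1 N, (l i - l' i) = 0 := by
    rw [Finset.sum_sub_distrib, hsum, hsum']; ring
  have hpos : 0 < ∑ i ∈ Finset.Icc 1 N, (l i - l' i) :=
    Finset.sum_pos' (fun i hi => sub_nonneg.mpr (key i hi))
      ⟨j', hj', sub_pos.mpr hstrict⟩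
  linarith

theorem stmt13 (n N : ℕ) (hn : 2 ≤ n) (hN : N = n + 1) (hNo : Odd N)
    (l l' : ℕ → ℝ) (hl : l ∈ LambdaOdd N) (hl' : l' ∈ LambdaOdd N) (hne : l ≠ l') :
    interior (convexHull ℝ {x | ∃ i ∈ Finset.Icc 1 N, x = vPt n l i}) ∩
      interior (convexHull ℝ {x | ∃ i ∈ Finset.Icc 1 N, x = vPt n l' i}) = ∅ := by
  rw [Set.eq_empty_iff_forall_notMem]
  rintro x ⟨hx1, hx2⟩
  obtain ⟨t, ht0, ht1, hxt⟩ := repr_aux n N l x (interior_subset hx1)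
  obtain ⟨s, hs0, hs1, hxs⟩ := repr_aux n N l' x (interior_subset hx2)
  have htpos := pos_aux n N hn hN l hl x hx1 t ht0 ht1 hxt
  have hspos := pos_aux n N hn hN l' hl' x hx2 s hs0 hs1 hxs
  set C : ℕ → ℝ := fun m => l m * t m - l' m * s m with hCdef
  have hsum1 : ∑ m ∈ Finset.Icc 1 N, t m • vPt n l m
      = ∑ m ∈ Finset.Icc 1 N, (l m * t m) • dVec n m :=
    Finset.sum_congr rfl fun m _ => by rw [vPt, smul_smul, mul_comm]
  have hsum2 : ∑ m ∈ Finset.Icc 1 N, s m • vPt n l' m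
      = ∑ m ∈ Finset.Icc 1 N, (l' m * s m) • dVec n m :=
    Finset.sum_congr rfl fun m _ => by rw [vPt, smul_smul, mul_comm]
  have hstep : ∀ p : Fin n, C ((p : ℕ) + 2) = C ((p : ℕ) + 1) := by
    intro p
    have e1 := tele_aux n N hN (fun m => l m * t m) p
    have e2 := tele_aux n N hN (fun m => l' m * s m) p
    have e4 : (∑ m ∈ Finset.Icc 1 N, (l m * t m) • dVec n m) p
        = (∑ m ∈ Finset.Icc 1 N, (l' m * s m) • dVec n m) p := by
      rw [← hsum1, ← hsum2, ← hxt, ← hxs]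
    rw [e1, e2] at e4
    simp only [hCdef]
    linarith
  have hconst := const_aux n N hN C hstep
  have hCm : ∀ i ∈ Finset.Icc 1 N, l i * t i - l' i * s i = C 1 := by
    intro i hi
    rw [Finset.mem_Icc] at hi
    exact hconst i hi.1 hi.2
  rcases lt_trichotomy (C 1) 0 with hc | hc | hc
  · exact sum_contra N l' l s t hl' hl hs0 ht0 (-(C 1)) (by linarith)
      (fun i hi => by have := hCm i hi; linarith)
  · -- C 1 = 0 forces l = l'
    apply hne
    obtain ⟨hsupp, j, hj, hlj, hsign, hsum⟩ := hl
    obtain ⟨hsupp', j', hj', hlj', hsign', hsum'⟩ := hl'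
    funext i
    by_cases hi : i ∈ Finset.Icc 1 N
    · have h := hCm i hi
      rw [hc] at h
      have h2 := htpos i hi
      have h3 := hspos i hi
      have hlival : l i = 0 ∨ l i = 1 ∨ l i = -1 := by
        by_cases hh : i = j
        · left; rw [hh]; exact hlj
        · right; exact hsign i hi hh
      have hl'ival : l' i = 0 ∨ l' i = 1 ∨ l' i = -1 := by
        by_cases hh : i = j'
        · left; rw [hh]; exact hlj'
        · right; exact hsign' i hi hh
      rcases hlival with h' | h' | h' <;> rcases hl'ival with h'' | h'' | h'' <;>
        rw [h', h''] at h ⊢ <;> linarith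
    · rw [hsupp i hi, hsupp' i hi]
  · exact sum_contra N l l' t s hl hl' ht0 hs0 (C 1) hc hCm
end
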